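/- Let G be a finitely generated group with fixed finite symmetric generating set S, K ≤ G a subgroup, and Γ = Sch(K) the Schreier graph of K. Let μ be a symmetric, adapted probability measure on G with finite first moment, and (X_t) the μ-random walk. Let A ⊆ Γ be a finite set of vertices and r(A) = max{|β| : β ∈ A}. For a vertex α ∈ Γ let E_t(α) be the event that αX_t ∉ A, αX_{t+1} ∉ A, and αX_t and αX_{t+1} lie in different connected components of the induced subgraph of Γ on Γ∖A. Then for any integer m ≥ 0: Σ_{t≥m} P[E_t(α)] ≤ |A| · Σ_{u∈G} μ(u)·|u|· g_K^{m+}(α, B(K, r(A)+|u|)), where B(K,ρ) is the ball of radius ρ about the root K in Γ. -/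
import Mathlib


open Filter MeasureTheory
open scoped ENNReal Topology

noncomputable section

namespace Paper

variable {G : Type*} [Group G]

/-- A probability measure on a group is symmetric if `μ(x⁻¹) = μ(x)`. -/
def IsSymmetric (μ : PMF G) : Prop := ∀ x : G, μ x⁻¹ = μ x

/-- A probability measure on a group is adapted if its support generates the group. -/
def IsAdapted (μ : PMF G) : Prop := Subgroup.closure μ.support = ⊤

/-- Convolution of two probability measures on a group. -/
def conv (μ ν : PMF G) : PMF G := μ.bind fun x => ν.map fun y => x * y

/-- `iterConv μ t` is the `t`-fold convolution `μ^{*t}`, with `μ^{*0} = δ_1`. -/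
def iterConv (μ : PMF G) : ℕ → PMF G
  | 0 => PMF.pure 1
  | t + 1 => conv (iterConv μ t) μ

/-- Shannon entropy `H(p) = -∑ p(a) log p(a)`. -/
def pmfEntropy {α : Type*} (p : PMF α) : ℝ := ∑' a, Real.negMulLog ((p a).toReal)

/-- A probability measure has finite (Shannon) entropy when the defining series
converges. -/
def FiniteEntropy {α : Type*} (p : PMF α) : Prop :=
  Summable fun a => Real.negMulLog ((p a).toReal)

/-- The random walk entropy `h(G,μ) = lim_t H(μ^{*t})/t`. -/
def rwEntropy (μ : PMF G) : ℝ :=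
  limUnder atTop fun t : ℕ => pmfEntropy (iterConv μ t) / t

/-- Word length of `x` with respect to a generating set `S`. -/
def wordLength (S : Set G) (x : G) : ℕ :=
  sInf {n | ∃ l : List G, l.length = n ∧ (∀ a ∈ l, a ∈ S) ∧ l.prod = x}

/-- `μ` has finite `k`-th moment w.r.t. the generating set `S`. -/
def FiniteMoment (S : Set G) (μ : PMF G) (k : ℕ) : Prop :=
  Summable fun x : G => (μ x).toReal * (wordLength S x : ℝ) ^ k

/-- The space `K\G` of right cosets `Kg`. -/
abbrev RightCoset (K : Subgroup G) := Quotient (QuotientGroup.rightRel K)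

/-- The right coset `Kg`. -/
def rcMk (K : Subgroup G) (g : G) : RightCoset K :=
  Quotient.mk (QuotientGroup.rightRel K) g

/-- Shannon entropy of the pushforward of `p` under `x ↦ Kx`. -/
def cosetEntropy (K : Subgroup G) (p : PMF G) : ℝ := pmfEntropy (p.map (rcMk K))

/-- The random walk entropy `h(G/N, μ̄)` of the quotient walk,
expressed as `lim_t H(N X_t)/t`. -/
def quotEntropy (μ : PMF G) (N : Subgroup G) : ℝ :=
  limUnder atTop fun t : ℕ => cosetEntropy N (iterConv μ t) / t

/-- Right multiplication by `g` on the space of right cosets: `Kx ↦ Kxg`. -/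
def cosetMul (K : Subgroup G) (α : RightCoset K) (g : G) : RightCoset K :=
  Quotient.liftOn α (fun x => rcMk K (x * g)) (by
    intro a b h
    have h' : b * a⁻¹ ∈ K := QuotientGroup.rightRel_apply.mp h
    apply Quotient.sound
    show QuotientGroup.rightRel K (a * g) (b * g)
    rw [QuotientGroup.rightRel_apply]
    have e : b * g * (a * g)⁻¹ = b * a⁻¹ := by group
    rw [e]; exact h')

/-- The graph distance in the Schreier graph of `K` (w.r.t. the generating set `S`)
from the coset `α` to the root coset `K`. -/
def cosetDist (S : Set G) (K : Subgroup G) (α : RightCoset K) : ℕ :=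
  sInf {n | ∃ l : List G, l.length = n ∧ (∀ a ∈ l, a ∈ S) ∧ rcMk K l.prod = α}

/-- The ball of radius `ρ` about the root in the Schreier graph of `K`. -/
def schreierBall (S : Set G) (K : Subgroup G) (ρ : ℕ) : Set (RightCoset K) :=
  {β | cosetDist S K β ≤ ρ}

open scoped Classical in
/-- The Green function `g_K^{m+}(α, B) = ∑_{t ≥ m} P[α X_t ∈ B]`. -/
def green (μ : PMF G) (K : Subgroup G) (m : ℕ) (α : RightCoset K)
    (B : Set (RightCoset K)) : ℝ≥0∞ :=
  ∑' (t : ℕ) (x : G), if cosetMul K α x ∈ B then iterConv μ (m + t) x else 0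

/-- A subgroup `K` is `μ`-transient if the expected number of returns of the induced
walk on `K\G` to the root is finite, i.e. `∑_t μ^{*t}(K) < ∞`. -/
def IsTransient (μ : PMF G) (K : Subgroup G) : Prop :=
  (∑' (t : ℕ) (x : ↥K), iterConv μ t ↑x) < ⊤

/-- `β` and `β'` are joined by a path avoiding `A` in the Schreier graph of `K`
(w.r.t. the generating set `S`). -/
def AvoidsPath (S : Set G) (K : Subgroup G) (A : Set (RightCoset K))
    (β β' : RightCoset K) : Prop :=
  ∃ (m : ℕ) (c : ℕ → RightCoset K), c 0 = β ∧ c m = β' ∧ (∀ i ≤ m, c i ∉ A) ∧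
    ∀ i < m, ∃ s ∈ S, c (i + 1) = cosetMul K (c i) s

section Aux

lemma cosetMul_rcMk (K : Subgroup G) (g h : G) :
    cosetMul K (rcMk K g) h = rcMk K (g * h) := rfl

lemma cosetMul_mul (K : Subgroup G) (β : RightCoset K) (g h : G) :
    cosetMul K (cosetMul K β g) h = cosetMul K β (g * h) := by
  induction β using Quotient.inductionOn with
  | h a => show rcMk K (a * g * h) = rcMk K (a * (g * h)); rw [mul_assoc]

lemma cosetMul_one (K : Subgroup G) (β : RightCoset K) :
    cosetMul K β 1 = β := by
  induction β using Quotient.inductionOn with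
  | h a => show rcMk K (a * 1) = _; rw [mul_one]; rfl

lemma exists_word {S : Finset G} (hgen : Subgroup.closure (S : Set G) = ⊤)
    (hSsym : ∀ s ∈ S, s⁻¹ ∈ S) (x : G) :
    ∃ l : List G, (∀ a ∈ l, a ∈ (S : Set G)) ∧ l.prod = x := by
  have hx : x ∈ Subgroup.closure (S : Set G) := by rw [hgen]; trivial
  induction hx using Subgroup.closure_induction with
  | mem s hs => exact ⟨[s], by simpa using hs, by simp⟩
  | one => exact ⟨[], by simp, by simp⟩
  | mul a b _ _ ha hb =>
      obtain ⟨l1, h1, e1⟩ := ha; obtain ⟨l2, h2, e2⟩ := hb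
      refine ⟨l1 ++ l2, ?_, by simp [e1, e2]⟩
      intro a ha'
      rcases List.mem_append.mp ha' with h | h
      · exact h1 a h
      · exact h2 a h
  | inv a _ ha =>
      obtain ⟨l, h, e⟩ := ha
      refine ⟨(l.map fun x => x⁻¹).reverse, ?_, ?_⟩
      · intro b hb
        simp only [List.mem_reverse, List.mem_map] at hb
        obtain ⟨c, hc, rfl⟩ := hb
        exact hSsym c (h c hc)
      · rw [← List.prod_inv_reverse, e]

lemma wordLength_spec {S : Finset G} (hgen : Subgroup.closure (S : Set G) = ⊤)
    (hSsym : ∀ s ∈ S, s⁻¹ ∈ S) (u : G) :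
    ∃ l : List G, l.length = wordLength (S : Set G) u ∧
      (∀ a ∈ l, a ∈ (S : Set G)) ∧ l.prod = u := by
  have hne : {n | ∃ l : List G, l.length = n ∧ (∀ a ∈ l, a ∈ (S : Set G)) ∧
      l.prod = u}.Nonempty := by
    obtain ⟨l, h1, h2⟩ := exists_word hgen hSsym u
    exact ⟨l.length, l, rfl, h1, h2⟩
  exact Nat.sInf_mem hne

lemma cosetDist_spec {S : Finset G} (hgen : Subgroup.closure (S : Set G) = ⊤)
    (hSsym : ∀ s ∈ S, s⁻¹ ∈ S) (K : Subgroup G) (β : RightCoset K) :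
    ∃ l : List G, l.length = cosetDist (S : Set G) K β ∧
      (∀ a ∈ l, a ∈ (S : Set G)) ∧ rcMk K l.prod = β := by
  have hne : {n | ∃ l : List G, l.length = n ∧ (∀ a ∈ l, a ∈ (S : Set G)) ∧
      rcMk K l.prod = β}.Nonempty := by
    obtain ⟨g, hg⟩ := Quotient.exists_rep β
    obtain ⟨l, h1, h2⟩ := exists_word hgen hSsym g
    exact ⟨l.length, l, rfl, h1, by rw [h2, ← hg]; rfl⟩
  exact Nat.sInf_mem hne

lemma cosetDist_mul_le {S : Finset G} (hgen : Subgroup.closure (S : Set G) = ⊤)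
    (hSsym : ∀ s ∈ S, s⁻¹ ∈ S) (K : Subgroup G) (β : RightCoset K)
    (w : List G) (hw : ∀ a ∈ w, a ∈ (S : Set G)) :
    cosetDist (S : Set G) K (cosetMul K β w.prod) ≤ cosetDist (S : Set G) K β + w.length := by
  obtain ⟨l, hlen, hmem, hprod⟩ := cosetDist_spec hgen hSsym K β
  refine Nat.sInf_le ⟨l ++ w, by simp [hlen], ?_, ?_⟩
  · intro a ha
    rcases List.mem_append.mp ha with h | h
    · exact hmem a h
    · exact hw a h
  · rw [List.prod_append, ← cosetMul_rcMk, hprod]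

lemma path_hits {S : Finset G} {K : Subgroup G} {A : Set (RightCoset K)}
    (β : RightCoset K) (l : List G) (hl : ∀ a ∈ l, a ∈ (S : Set G))
    (hβ : β ∉ A) (hno : ¬ AvoidsPath (S : Set G) K A β (cosetMul K β l.prod)) :
    ∃ i ≤ l.length, cosetMul K β (l.take i).prod ∈ A := by
  by_contra h
  push_neg at h
  apply hno
  refine ⟨l.length, fun i => cosetMul K β (l.take i).prod, ?_, ?_, ?_, ?_⟩
  · simp [cosetMul_one]
  · simp
  · exact fun i hi => h i hi
  · intro i hi
    refine ⟨l[i], hl _ (List.getElem_mem hi), ?_⟩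
    rw [cosetMul_mul, ← List.prod_take_succ l i hi]

end Aux

open scoped Classical in
/-- **Lemma 4.1.** Let `A` be a finite set of vertices of the Schreier graph `Γ` of
`K ≤ G` and let `E_t(α)` be the event that `α X_t` and `α X_{t+1}` lie in different
connected components of `Γ ∖ A`.  Then
`∑_{t ≥ m} P[E_t(α)] ≤ |A| ⬝ E[ |X_1| ⬝ g_K^{m+}(α, B(K, r(A) + |X_1|)) ]`. -/
theorem escape_probability_bound
    (S : Finset G) (hgen : Subgroup.closure (S : Set G) = ⊤)
    (hSsym : ∀ s ∈ S, s⁻¹ ∈ S)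
    (μ : PMF G) (hadapted : IsAdapted μ) (hsym : IsSymmetric μ)
    (hmom : FiniteMoment (S : Set G) μ 1)
    (K : Subgroup G) (A : Set (RightCoset K)) (hA : A.Finite)
    (α : RightCoset K) (m : ℕ) :
    (∑' (t : ℕ) (x : G) (u : G),
        (iterConv μ (m + t)) x * μ u *
          (if cosetMul K α x ∉ A ∧ cosetMul K α (x * u) ∉ A ∧
              ¬ AvoidsPath (S : Set G) K A (cosetMul K α x) (cosetMul K α (x * u))
            then 1 else 0)) ≤
      (A.ncard : ℝ≥0∞) * ∑' u : G, μ u * (wordLength (S : Set G) u : ℝ≥0∞) *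
        green μ K m α
          (schreierBall (S : Set G) K
            (sSup (cosetDist (S : Set G) K '' A) + wordLength (S : Set G) u)) := by
  classical
  set r := sSup (cosetDist (S : Set G) K '' A) with hr
  have key : ∀ (t : ℕ) (x : G) (u : G),
      (iterConv μ (m + t)) x * μ u *
        (if cosetMul K α x ∉ A ∧ cosetMul K α (x * u) ∉ A ∧
            ¬ AvoidsPath (S : Set G) K A (cosetMul K α x) (cosetMul K α (x * u))
          then 1 else 0) ≤
      ((A.ncard : ℝ≥0∞) * (μ u * (wordLength (S : Set G) u : ℝ≥0∞))) *
        (if cosetMul K α x ∈ schreierBall (S : Set G) K (r + wordLength (S : Set G) u)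
          then iterConv μ (m + t) x else 0) := by
    intro t x u
    split_ifs with hc hball hball
    · -- the event holds; derive consequences
      obtain ⟨h1, h2, h3⟩ := hc
      obtain ⟨l, hlen, hmem, hprod⟩ := wordLength_spec hgen hSsym u
      have hcm : cosetMul K α (x * u) = cosetMul K (cosetMul K α x) l.prod := by
        rw [hprod, cosetMul_mul]
      rw [hcm] at h2 h3
      obtain ⟨i, hi, hγ⟩ := path_hits (cosetMul K α x) l hmem h1 h3
      have hcard : (1 : ℝ≥0∞) ≤ (A.ncard : ℝ≥0∞) := by
        have h0 : 0 < A.ncard := (Set.ncard_pos hA).mpr ⟨_, hγ⟩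
        exact_mod_cast h0
      have hwl1 : 1 ≤ wordLength (S : Set G) u := by
        rw [← hlen]
        rcases Nat.eq_zero_or_pos l.length with h | h
        swap
        · exact h
        · exfalso
          apply h3
          have hl1 : l.prod = 1 := by
            rw [List.length_eq_zero_iff.mp h]; rfl
          refine ⟨0, fun _ => cosetMul K α x, rfl, ?_, ?_, by omega⟩
          · rw [hl1, cosetMul_one]
          · intro i hi'
            interval_cases i
            exact h1
      have hwl : (1 : ℝ≥0∞) ≤ (wordLength (S : Set G) u : ℝ≥0∞) := by
        exact_mod_cast hwl1
      calc iterConv μ (m + t) x * μ u * 1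
          = (1 * (μ u * 1)) * iterConv μ (m + t) x := by ring
        _ ≤ ((A.ncard : ℝ≥0∞) * (μ u * (wordLength (S : Set G) u : ℝ≥0∞))) *
              iterConv μ (m + t) x := by
            exact mul_le_mul' (mul_le_mul' hcard (mul_le_mul' le_rfl hwl)) le_rfl
    · -- event holds but ball membership fails: impossible
      exfalso
      apply hball
      obtain ⟨h1, h2, h3⟩ := hc
      obtain ⟨l, hlen, hmem, hprod⟩ := wordLength_spec hgen hSsym u
      have hcm : cosetMul K α (x * u) = cosetMul K (cosetMul K α x) l.prod := by
        rw [hprod, cosetMul_mul]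
      rw [hcm] at h2 h3
      obtain ⟨i, hi, hγ⟩ := path_hits (cosetMul K α x) l hmem h1 h3
      have hγd : cosetDist (S : Set G) K (cosetMul K (cosetMul K α x) (l.take i).prod) ≤ r :=
        le_csSup (hA.image _).bddAbove ⟨_, hγ, rfl⟩
      set w := ((l.take i).map fun a => a⁻¹).reverse with hw
      have hwmem : ∀ a ∈ w, a ∈ (S : Set G) := by
        intro a ha
        simp only [hw, List.mem_reverse, List.mem_map] at ha
        obtain ⟨c, hc', rfl⟩ := ha
        exact hSsym c (hmem c (List.mem_of_mem_take hc'))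
      have hwprod : w.prod = ((l.take i).prod)⁻¹ := (List.prod_inv_reverse _).symm
      have hwlen : w.length = i := by
        simp only [hw, List.length_reverse, List.length_map, List.length_take]
        omega
      have hβeq : cosetMul K (cosetMul K (cosetMul K α x) (l.take i).prod) w.prod
          = cosetMul K α x := by
        rw [hwprod, cosetMul_mul, mul_inv_cancel, cosetMul_one]
      have hle := cosetDist_mul_le hgen hSsym K
        (cosetMul K (cosetMul K α x) (l.take i).prod) w hwmem
      rw [hβeq, hwlen] at hle
      show cosetDist (S : Set G) K (cosetMul K α x) ≤ r + wordLength (S : Set G) u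
      calc cosetDist (S : Set G) K (cosetMul K α x)
          ≤ cosetDist (S : Set G) K (cosetMul K (cosetMul K α x) (l.take i).prod) + i := hle
        _ ≤ r + wordLength (S : Set G) u := add_le_add hγd (hlen ▸ hi)
    · simp
    · simp
  have hgreen : ∀ u : G, green μ K m α
      (schreierBall (S : Set G) K (r + wordLength (S : Set G) u)) =
      ∑' (t : ℕ) (x : G),
        (if cosetMul K α x ∈ schreierBall (S : Set G) K (r + wordLength (S : Set G) u)
          then iterConv μ (m + t) x else 0) := by
    intro u
    rw [green]
  calc (∑' (t : ℕ) (x : G) (u : G),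
        (iterConv μ (m + t)) x * μ u *
          (if cosetMul K α x ∉ A ∧ cosetMul K α (x * u) ∉ A ∧
              ¬ AvoidsPath (S : Set G) K A (cosetMul K α x) (cosetMul K α (x * u))
            then 1 else 0))
      = ∑' (t : ℕ) (u : G) (x : G),
        (iterConv μ (m + t)) x * μ u *
          (if cosetMul K α x ∉ A ∧ cosetMul K α (x * u) ∉ A ∧
              ¬ AvoidsPath (S : Set G) K A (cosetMul K α x) (cosetMul K α (x * u))
            then 1 else 0) := tsum_congr fun t => ENNReal.tsum_comm
    _ = ∑' (u : G) (t : ℕ) (x : G),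
        (iterConv μ (m + t)) x * μ u *
          (if cosetMul K α x ∉ A ∧ cosetMul K α (x * u) ∉ A ∧
              ¬ AvoidsPath (S : Set G) K A (cosetMul K α x) (cosetMul K α (x * u))
            then 1 else 0) := ENNReal.tsum_comm
    _ ≤ ∑' (u : G) (t : ℕ) (x : G),
          ((A.ncard : ℝ≥0∞) * (μ u * (wordLength (S : Set G) u : ℝ≥0∞))) *
            (if cosetMul K α x ∈ schreierBall (S : Set G) K (r + wordLength (S : Set G) u)
              then iterConv μ (m + t) x else 0) :=
        ENNReal.tsum_le_tsum fun u => ENNReal.tsum_le_tsum fun t =>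
          ENNReal.tsum_le_tsum fun x => key t x u
    _ = ∑' (u : G),
          ((A.ncard : ℝ≥0∞) * (μ u * (wordLength (S : Set G) u : ℝ≥0∞))) *
            green μ K m α (schreierBall (S : Set G) K (r + wordLength (S : Set G) u)) := by
        refine tsum_congr fun u => ?_
        rw [hgreen u]
        simp only [ENNReal.tsum_mul_left]
    _ = (A.ncard : ℝ≥0∞) * ∑' u : G, μ u * (wordLength (S : Set G) u : ℝ≥0∞) *
          green μ K m α (schreierBall (S : Set G) K (r + wordLength (S : Set G) u)) := by
        simp only [mul_assoc, ENNReal.tsum_mul_left]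


end Paper
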